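/- arXiv:2604.22158 — 3 statements merged into one kernel-verified Lean document; each statement's English description precedes it below -/
import Mathlib

section
/- Let z_1,…,z_T ∈ ℝ^d, λ > 0, R_z > 0, ρ ≥ 1 a natural number with λ ≥ R_z²·ρ/log 2, and let V_t = λ·I + ∑_{s=1}^{t} z_s z_sᵀ. If t ≥ ρ + 1 and ‖z_s‖ ≤ R_z for all s ∈ {t−ρ+1,…,t}, then V_t ⪯ 2·V_{t−ρ}. -/
/-- The Euclidean norm of a vector given as a finitely-indexed family of reals. -/
noncomputable def euclNorm {ι : Type*} [Fintype ι] (v : ι → ℝ) : ℝ :=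
  Real.sqrt (∑ i, v i ^ 2)

/-!
In the Loewner order every rank-one term satisfies `z zᵀ ⪯ ‖z‖² • I` (Cauchy–Schwarz), so the
last `ρ` updates add at most `ρ R_z² • I ⪯ λ • I ⪯ V_{t-ρ}` to `V_{t-ρ}`, using `log 2 ≤ 1`.
-/

open Matrix Finset
open scoped MatrixOrder

section LoewnerOrder

variable {n ι : Type*} [DecidableEq n]

theorem Matrix.smul_one_le_smul_one {a b : ℝ} (hab : a ≤ b) :
    a • (1 : Matrix n n ℝ) ≤ b • 1 := by
  rw [Matrix.le_iff, ← sub_smul]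
  exact PosSemidef.one.smul (sub_nonneg.mpr hab)

variable [Fintype n]

theorem Matrix.vecMulVec_self_le_dotProduct_smul_one (v : n → ℝ) :
    vecMulVec v v ≤ (v ⬝ᵥ v) • (1 : Matrix n n ℝ) := by
  have hHerm : ((v ⬝ᵥ v) • (1 : Matrix n n ℝ) - vecMulVec v v).IsHermitian :=
    (isHermitian_one.smul (IsSelfAdjoint.all _)).sub
      (posSemidef_vecMulVec_self_star v).isHermitian
  refine Matrix.le_iff.mpr (PosSemidef.of_dotProduct_mulVec_nonneg hHerm fun x => ?_)
  have hCauchySchwarz : (v ⬝ᵥ x) ^ 2 ≤ (v ⬝ᵥ v) * (x ⬝ᵥ x) := by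
    simpa only [dotProduct, sq] using sum_mul_sq_le_sq_mul_sq univ v x
  rw [star_trivial, sub_mulVec, dotProduct_sub, smul_mulVec, one_mulVec, dotProduct_smul,
    vecMulVec_mulVec, op_smul_eq_smul, dotProduct_smul, smul_eq_mul, smul_eq_mul,
    dotProduct_comm x v]
  nlinarith

theorem Matrix.sum_vecMulVec_self_le (s : Finset ι) (z : ι → n → ℝ) :
    ∑ i ∈ s, vecMulVec (z i) (z i) ≤ (∑ i ∈ s, z i ⬝ᵥ z i) • (1 : Matrix n n ℝ) := by
  rw [sum_smul]
  exact sum_le_sum fun i _ => vecMulVec_self_le_dotProduct_smul_one (z i)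

theorem Matrix.smul_one_le_smul_one_add_sum_vecMulVec (lam : ℝ) (s : Finset ι)
    (z : ι → n → ℝ) :
    lam • (1 : Matrix n n ℝ) ≤ lam • 1 + ∑ i ∈ s, vecMulVec (z i) (z i) :=
  le_add_of_nonneg_right <| PosSemidef.nonneg <|
    posSemidef_sum s fun i _ => posSemidef_vecMulVec_self_star (z i)

theorem Matrix.add_sum_vecMulVec_le_two_smul {lam : ℝ} {A : Matrix n n ℝ} (hA : lam • 1 ≤ A)
    (s : Finset ι) (z : ι → n → ℝ) (hz : ∑ i ∈ s, z i ⬝ᵥ z i ≤ lam) :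
    A + ∑ i ∈ s, vecMulVec (z i) (z i) ≤ (2 : ℝ) • A :=
  calc A + ∑ i ∈ s, vecMulVec (z i) (z i)
      ≤ A + lam • 1 := by
        gcongr
        exact (sum_vecMulVec_self_le s z).trans (smul_one_le_smul_one hz)
    _ ≤ A + A := by gcongr
    _ = (2 : ℝ) • A := (two_smul ℝ A).symm

end LoewnerOrder

theorem dotProduct_self_le_sq_of_euclNorm_le {n : Type*} [Fintype n] {v : n → ℝ} {r : ℝ}
    (hv : euclNorm v ≤ r) : v ⬝ᵥ v ≤ r ^ 2 := by
  simpa only [dotProduct, sq] using (Real.sqrt_le_iff.mp hv).2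

theorem Finset.sum_Icc_one_eq_add_sum_Ioc {M : Type*} [AddCommMonoid M] (f : ℕ → M) {a t : ℕ}
    (hat : a ≤ t) :
    ∑ s ∈ Icc 1 t, f s = ∑ s ∈ Icc 1 a, f s + ∑ s ∈ Ioc a t, f s := by
  simpa only [← Icc_add_one_left_eq_Ioc 0, zero_add] using
    (sum_Ioc_consecutive f (Nat.zero_le a) hat).symm

theorem stmt_4_general {d : ℕ} (z : ℕ → Fin d → ℝ) (lam Rz : ℝ)
    (ρ : ℕ) (hlamρ : Rz ^ 2 * (ρ : ℝ) / Real.log 2 ≤ lam)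
    (V : ℕ → Matrix (Fin d) (Fin d) ℝ)
    (hV : ∀ t, V t = lam • (1 : Matrix (Fin d) (Fin d) ℝ) +
      ∑ s ∈ Finset.Icc 1 t, Matrix.vecMulVec (z s) (z s))
    (t : ℕ)
    (hz : ∀ s ∈ Finset.Icc (t - ρ + 1) t, euclNorm (z s) ≤ Rz) :
    ((2 : ℝ) • V (t - ρ) - V t).PosSemidef := by
  have hsplit : V t = V (t - ρ) + ∑ s ∈ Ioc (t - ρ) t, vecMulVec (z s) (z s) := by
    rw [hV, hV, add_assoc, ← sum_Icc_one_eq_add_sum_Ioc _ (Nat.sub_le t ρ)]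
  have hlog : Rz ^ 2 * (ρ : ℝ) ≤ Rz ^ 2 * (ρ : ℝ) / Real.log 2 :=
    le_div_self (by positivity) (Real.log_pos one_lt_two)
      (by linarith [Real.log_le_sub_one_of_pos zero_lt_two])
  have henergy : ∑ s ∈ Ioc (t - ρ) t, z s ⬝ᵥ z s ≤ lam :=
    calc ∑ s ∈ Ioc (t - ρ) t, z s ⬝ᵥ z s ≤ ∑ _s ∈ Ioc (t - ρ) t, Rz ^ 2 :=
          sum_le_sum fun s hs => dotProduct_self_le_sq_of_euclNorm_le
            (hz s (by rwa [Icc_add_one_left_eq_Ioc]))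
      _ ≤ Rz ^ 2 * ρ := by
          rw [sum_const, nsmul_eq_mul, mul_comm, Nat.card_Ioc]
          gcongr
          exact_mod_cast (by omega : t - (t - ρ) ≤ ρ)
      _ ≤ lam := hlog.trans hlamρ
  refine Matrix.le_iff.mp (hsplit ▸ add_sum_vecMulVec_le_two_smul ?_ _ z henergy)
  rw [hV]
  exact smul_one_le_smul_one_add_sum_vecMulVec lam _ z

/-- with `V t = λ·I + ∑_{s=1}^t z_s z_sᵀ`, if `ρ ≥ 1`, `λ ≥ R_z²·ρ/log 2`,
`t ≥ ρ + 1` and `‖z_s‖ ≤ R_z` for `s ∈ {t−ρ+1,…,t}`, then `V_t ⪯ 2·V_{t−ρ}`. -/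
theorem stmt_4 {d : ℕ} (T : ℕ) (z : ℕ → Fin d → ℝ) (lam Rz : ℝ) (hlam : 0 < lam) (hRz : 0 < Rz)
    (ρ : ℕ) (hρ : 1 ≤ ρ) (hlamρ : Rz ^ 2 * (ρ : ℝ) / Real.log 2 ≤ lam)
    (V : ℕ → Matrix (Fin d) (Fin d) ℝ)
    (hV : ∀ t, V t = lam • (1 : Matrix (Fin d) (Fin d) ℝ) +
      ∑ s ∈ Finset.Icc 1 t, Matrix.vecMulVec (z s) (z s))
    (t : ℕ) (ht : ρ + 1 ≤ t) (htT : t ≤ T)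
    (hz : ∀ s ∈ Finset.Icc (t - ρ + 1) t, euclNorm (z s) ≤ Rz) :
    ((2 : ℝ) • V (t - ρ) - V t).PosSemidef :=
  stmt_4_general z lam Rz ρ hlamρ V hV t hz
end

section
/- Let M, N be symmetric d×d matrices and λ > 0 with M ⪰ N ⪰ λ·I and det(M) ≤ 2·det(N), and let z ∈ ℝ^d with ‖z‖² ≤ λ. Then M + z zᵀ ⪯ 3·N. -/
open Matrix

namespace Matrix

variable {n : Type*} [DecidableEq n]

lemma PosDef.of_posSemidef_sub_smul_one {N : Matrix n n ℝ} {c : ℝ} (hc : 0 < c)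
    (hN : (N - c • 1).PosSemidef) : N.PosDef := by
  simpa using (PosDef.one.smul hc).add_posSemidef hN

variable [Fintype n]

lemma IsHermitian.posSemidef_sub_smul_one_iff {A : Matrix n n ℝ} (hA : A.IsHermitian) (c : ℝ) :
    (A - c • (1 : Matrix n n ℝ)).PosSemidef ↔ ∀ i, c ≤ hA.eigenvalues i := by
  conv_lhs => rw [hA.spectral_theorem]
  rw [← map_one (Unitary.conjStarAlgAut ℝ _ hA.eigenvectorUnitary), ← map_smul, ← map_sub]
  simp [Unitary.isUnit_coe.posSemidef_star_right_conjugate_iff, smul_one_eq_diagonal, diagonal_sub]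

lemma IsHermitian.posSemidef_smul_one_sub_iff {A : Matrix n n ℝ} (hA : A.IsHermitian) (c : ℝ) :
    (c • (1 : Matrix n n ℝ) - A).PosSemidef ↔ ∀ i, hA.eigenvalues i ≤ c := by
  conv_lhs => rw [hA.spectral_theorem]
  rw [← map_one (Unitary.conjStarAlgAut ℝ _ hA.eigenvectorUnitary), ← map_smul, ← map_sub]
  simp [Unitary.isUnit_coe.posSemidef_star_right_conjugate_iff, smul_one_eq_diagonal, diagonal_sub]

lemma posSemidef_smul_one_sub_of_det_le {B : Matrix n n ℝ} {c : ℝ}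
    (hB : (B - 1).PosSemidef) (hdet : B.det ≤ c) : (c • (1 : Matrix n n ℝ) - B).PosSemidef := by
  have hBh : B.IsHermitian := by simpa using hB.isHermitian.add isHermitian_one
  rw [← one_smul ℝ (1 : Matrix n n ℝ), hBh.posSemidef_sub_smul_one_iff] at hB
  rw [hBh.posSemidef_smul_one_sub_iff]
  intro j
  calc hBh.eigenvalues j = ∏ i ∈ {j}, hBh.eigenvalues i := by simp
    _ ≤ ∏ i, hBh.eigenvalues i :=
      Finset.prod_le_prod_of_subset_of_one_le (Finset.subset_univ _)
        (by simpa using zero_le_one.trans (hB j)) fun i _ _ ↦ hB i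
    _ = B.det := by simpa using hBh.det_eq_prod_eigenvalues.symm
    _ ≤ c := hdet

open scoped MatrixOrder in
lemma PosDef.posSemidef_smul_sub_of_det_le {M N : Matrix n n ℝ} {c : ℝ} (hN : N.PosDef)
    (hMN : (M - N).PosSemidef) (hdet : M.det ≤ c * N.det) : (c • N - M).PosSemidef := by
  obtain ⟨Y, hY, rfl⟩ := CStarAlgebra.isStrictlyPositive_iff_eq_star_mul_self.mp
    hN.isStrictlyPositive
  set B := star Y⁻¹ * M * Y⁻¹
  have hM : star Y * B * Y = M := by
    have hYY : Y⁻¹ * Y = 1 := nonsing_inv_mul Y ((isUnit_iff_isUnit_det Y).mp hY)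
    simp only [B, ← mul_assoc, ← star_mul, hYY, star_one, one_mul]
    simp [mul_assoc, hYY]
  have hB : (B - 1).PosSemidef := by
    rw [← hY.posSemidef_star_left_conjugate_iff]
    simpa [mul_sub, sub_mul, hM] using hMN
  have hdetB : B.det ≤ c := by
    rw [← hM, det_mul, det_mul, mul_right_comm, ← det_mul, mul_comm c] at hdet
    exact le_of_mul_le_mul_left hdet hN.det_pos
  have hconj : star Y * (c • 1 - B) * Y = c • (star Y * Y) - M := by
    simp [mul_sub, sub_mul, hM]
  rw [← hconj, hY.posSemidef_star_left_conjugate_iff]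
  exact posSemidef_smul_one_sub_of_det_le hB hdetB

lemma posSemidef_smul_one_sub_vecMulVec_self {z : n → ℝ} {c : ℝ} (hz : ∑ i, z i ^ 2 ≤ c) :
    (c • (1 : Matrix n n ℝ) - vecMulVec z z).PosSemidef := by
  have hzz : (vecMulVec z z).IsHermitian := by
    simpa using (posSemidef_vecMulVec_self_star z).isHermitian
  refine posSemidef_iff_dotProduct_mulVec.mpr ⟨(isHermitian_one.smul (.all c)).sub hzz, fun x ↦ ?_⟩
  have hquad : star x ⬝ᵥ ((c • (1 : Matrix n n ℝ) - vecMulVec z z) *ᵥ x)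
      = c * ∑ i, x i ^ 2 - (∑ i, z i * x i) ^ 2 := by
    rw [sub_mulVec, smul_mulVec, one_mulVec, vecMulVec_mulVec, dotProduct_sub, dotProduct_smul,
      star_trivial]
    simp [dotProduct, sq, Finset.mul_sum, mul_comm, mul_left_comm]
  rw [hquad, sub_nonneg]
  calc (∑ i, z i * x i) ^ 2 ≤ (∑ i, z i ^ 2) * ∑ i, x i ^ 2 := Finset.sum_mul_sq_le_sq_mul_sq _ _ _
    _ ≤ c * ∑ i, x i ^ 2 := by gcongr

end Matrix

lemma euclNorm_sq {ι : Type*} [Fintype ι] (v : ι → ℝ) : euclNorm v ^ 2 = ∑ i, v i ^ 2 :=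
  Real.sq_sqrt (by positivity)

theorem stmt_5_general {d : ℕ} (M N : Matrix (Fin d) (Fin d) ℝ)
    (lam : ℝ) (hlam : 0 < lam)
    (hMN : (M - N).PosSemidef) (hNlam : (N - lam • (1 : Matrix (Fin d) (Fin d) ℝ)).PosSemidef)
    (hdet : M.det ≤ 2 * N.det) (z : Fin d → ℝ) (hz : euclNorm z ^ 2 ≤ lam) :
    ((3 : ℝ) • N - (M + Matrix.vecMulVec z z)).PosSemidef := by
  have hM : ((2 : ℝ) • N - M).PosSemidef :=
    (PosDef.of_posSemidef_sub_smul_one hlam hNlam).posSemidef_smul_sub_of_det_le hMN hdet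
  have hzz : (lam • (1 : Matrix (Fin d) (Fin d) ℝ) - vecMulVec z z).PosSemidef :=
    posSemidef_smul_one_sub_vecMulVec_self (euclNorm_sq z ▸ hz)
  have hsplit : (3 : ℝ) • N - (M + vecMulVec z z)
      = ((2 : ℝ) • N - M) + (N - lam • 1) + (lam • 1 - vecMulVec z z) := by
    module
  rw [hsplit]
  exact (hM.add hNlam).add hzz

/-- if `M ⪰ N ⪰ λ·I` are symmetric, `det M ≤ 2·det N`, and `‖z‖² ≤ λ`,
then `M + z zᵀ ⪯ 3·N`. -/
theorem stmt_5 {d : ℕ} (M N : Matrix (Fin d) (Fin d) ℝ) (hMsymm : M.IsSymm) (hNsymm : N.IsSymm)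
    (lam : ℝ) (hlam : 0 < lam)
    (hMN : (M - N).PosSemidef) (hNlam : (N - lam • (1 : Matrix (Fin d) (Fin d) ℝ)).PosSemidef)
    (hdet : M.det ≤ 2 * N.det) (z : Fin d → ℝ) (hz : euclNorm z ^ 2 ≤ lam) :
    ((3 : ℝ) • N - (M + Matrix.vecMulVec z z)).PosSemidef :=
  stmt_5_general M N lam hlam hMN hNlam hdet z hz
end

section
/- Let ᾱ_1,…,ᾱ_J be symmetric positive semidefinite d×d matrices, let ξ ∈ ℝ, ε₁ > 0, c ≥ 0, ν > 0, and let Σ_a, Σ_safe be symmetric positive semidefinite d×d matrices with tr(Σ_a) ≤ ν and tr(Σ_safe) ≤ ν, such that ⟨ᾱ_j, Σ_safe⟩ ≤ ξ − ε₁ for all j and ⟨ᾱ_j, Σ_a⟩ ≤ ξ + c for all j. Then, with φ = ε₁/(ε₁ + c), the matrix Σ' = φ·Σ_a + (1−φ)·Σ_safe satisfies ⟨ᾱ_j, Σ'⟩ ≤ ξ for all j ∈ {1,…,J} and ‖Σ_a − Σ'‖ ≤ (2·ν/ε₁)·c. -/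
/-!
`Σ'` is a convex combination, so `⟨ᾱ_j, Σ'⟩ ≤ φ (ξ + c) + (1 - φ) (ξ - ε₁)`, and `φ = ε₁/(ε₁ + c)`
is exactly the weight making the right-hand side equal to `ξ`. For the distance,
`Σ_a - Σ' = (1 - φ) (Σ_a - Σ_safe)` with `1 - φ = c/(ε₁ + c) ≤ c/ε₁`, and the spectral norm of a
positive semidefinite matrix is its largest eigenvalue, hence at most its trace `≤ ν`.
-/

open scoped Matrix

/-- The spectral (ℓ²-operator) norm of a real matrix. -/
noncomputable def specNorm {m n : Type*} [Fintype m] [Fintype n] [DecidableEq n]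
    (A : Matrix m n ℝ) : ℝ :=
  ‖LinearMap.toContinuousLinearMap (Matrix.toEuclideanLin A)‖

/-- The trace inner product `⟨X, Y⟩ = tr(Xᵀ Y)` of two real matrices. -/
noncomputable def matInner {d : ℕ} (X Y : Matrix (Fin d) (Fin d) ℝ) : ℝ :=
  (Xᵀ * Y).trace

open scoped Matrix.Norms.L2Operator ComplexOrder

namespace Matrix

variable {𝕜 n : Type*} [RCLike 𝕜] [Fintype n] [DecidableEq n]

lemma IsHermitian.l2_opNorm_eq_norm_eigenvalues {A : Matrix n n 𝕜} (hA : A.IsHermitian) :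
    ‖A‖ = ‖hA.eigenvalues‖ := by
  conv_lhs => rw [hA.spectral_theorem, Unitary.conjStarAlgAut_apply, ← Unitary.coe_star,
    CStarRing.norm_mul_coe_unitary, CStarRing.norm_coe_unitary_mul, l2_opNorm_diagonal]
  exact RCLike.ofRealLI.isometry.postcomp_pi.norm_map_of_map_zero (by ext; simp) _

lemma PosSemidef.l2_opNorm_le_re_trace {A : Matrix n n 𝕜} (hA : A.PosSemidef) :
    ‖A‖ ≤ RCLike.re A.trace := by
  have hnonneg := hA.eigenvalues_nonneg
  have htrace : RCLike.re A.trace = ∑ i, hA.1.eigenvalues i := by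
    simp [hA.1.trace_eq_sum_eigenvalues]
  rw [hA.1.l2_opNorm_eq_norm_eigenvalues, htrace]
  refine (pi_norm_le_iff_of_nonneg (Finset.sum_nonneg fun i _ => hnonneg i)).2 fun i => ?_
  rw [Real.norm_of_nonneg (hnonneg i)]
  exact Finset.single_le_sum (fun j _ => hnonneg j) (Finset.mem_univ i)

end Matrix

lemma specNorm_eq_l2_opNorm {m n : Type*} [Fintype m] [Fintype n] [DecidableEq n]
    (A : Matrix m n ℝ) : specNorm A = ‖A‖ :=
  rfl

lemma matInner_smul_add_smul_right {d : ℕ} (X Y Z : Matrix (Fin d) (Fin d) ℝ) (a b : ℝ) :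
    matInner X (a • Y + b • Z) = a * matInner X Y + b * matInner X Z := by
  simp [matInner, Matrix.mul_add, Matrix.trace_add]

lemma norm_sub_smul_add_one_sub_smul_le {E : Type*} [SeminormedAddCommGroup E]
    [NormedSpace ℝ E] {x y : E} {ν t : ℝ} (hx : ‖x‖ ≤ ν) (hy : ‖y‖ ≤ ν) (ht : t ≤ 1) :
    ‖x - (t • x + (1 - t) • y)‖ ≤ (1 - t) * (2 * ν) := by
  have hsub : x - (t • x + (1 - t) • y) = (1 - t) • (x - y) := by module
  rw [hsub, norm_smul, Real.norm_of_nonneg (sub_nonneg.2 ht)]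
  gcongr
  linarith [norm_sub_le x y]

theorem stmt_17_general {d J : ℕ} (alphaBar : Fin J → Matrix (Fin d) (Fin d) ℝ)
    (ξ ε₁ c ν : ℝ) (hε₁ : 0 < ε₁) (hc : 0 ≤ c) (hν : 0 < ν)
    (Sa Ssafe : Matrix (Fin d) (Fin d) ℝ) (hSa : Sa.PosSemidef) (hSsafe : Ssafe.PosSemidef)
    (htrSa : Sa.trace ≤ ν) (htrSsafe : Ssafe.trace ≤ ν)
    (hSsafeC : ∀ j, matInner (alphaBar j) Ssafe ≤ ξ - ε₁)
    (hSaC : ∀ j, matInner (alphaBar j) Sa ≤ ξ + c) :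
    (∀ j, matInner (alphaBar j)
        ((ε₁ / (ε₁ + c)) • Sa + (1 - ε₁ / (ε₁ + c)) • Ssafe) ≤ ξ) ∧
    specNorm (Sa - ((ε₁ / (ε₁ + c)) • Sa + (1 - ε₁ / (ε₁ + c)) • Ssafe)) ≤ 2 * ν / ε₁ * c := by
  have hpos : 0 < ε₁ + c := by linarith
  have hφ_le_one : ε₁ / (ε₁ + c) ≤ 1 := div_le_one_of_le₀ (by linarith) hpos.le
  have hφ_compl : 1 - ε₁ / (ε₁ + c) = c / (ε₁ + c) := by field_simp; ring
  refine ⟨fun j => ?_, ?_⟩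
  · rw [matInner_smul_add_smul_right]
    calc _ ≤ ε₁ / (ε₁ + c) * (ξ + c) + (1 - ε₁ / (ε₁ + c)) * (ξ - ε₁) := by
          gcongr <;> linarith [hSaC j, hSsafeC j]
      _ = ξ := by rw [hφ_compl]; field_simp; ring
  · have hSa_norm : ‖Sa‖ ≤ ν := by simpa using hSa.l2_opNorm_le_re_trace.trans htrSa
    have hSsafe_norm : ‖Ssafe‖ ≤ ν := by simpa using hSsafe.l2_opNorm_le_re_trace.trans htrSsafe
    rw [specNorm_eq_l2_opNorm]
    calc _ ≤ (1 - ε₁ / (ε₁ + c)) * (2 * ν) :=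
          norm_sub_smul_add_one_sub_smul_le hSa_norm hSsafe_norm hφ_le_one
      _ ≤ c / ε₁ * (2 * ν) := by rw [hφ_compl]; gcongr; linarith
      _ = 2 * ν / ε₁ * c := by ring

/-- if `Σ_a, Σ_safe ⪰ 0` have traces at most `ν`, `⟨ᾱ_j, Σ_safe⟩ ≤ ξ − ε₁` and
`⟨ᾱ_j, Σ_a⟩ ≤ ξ + c`, then with `φ = ε₁/(ε₁ + c)`, the matrix
`Σ' = φ·Σ_a + (1−φ)·Σ_safe` satisfies `⟨ᾱ_j, Σ'⟩ ≤ ξ` for all `j`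
and `‖Σ_a − Σ'‖ ≤ (2ν/ε₁)·c`. -/
theorem stmt_17 {d J : ℕ} (alphaBar : Fin J → Matrix (Fin d) (Fin d) ℝ)
    (halphaSymm : ∀ j, (alphaBar j).IsSymm) (halphaPsd : ∀ j, (alphaBar j).PosSemidef)
    (ξ ε₁ c ν : ℝ) (hε₁ : 0 < ε₁) (hc : 0 ≤ c) (hν : 0 < ν)
    (Sa Ssafe : Matrix (Fin d) (Fin d) ℝ) (hSa : Sa.PosSemidef) (hSsafe : Ssafe.PosSemidef)
    (htrSa : Sa.trace ≤ ν) (htrSsafe : Ssafe.trace ≤ ν)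
    (hSsafeC : ∀ j, matInner (alphaBar j) Ssafe ≤ ξ - ε₁)
    (hSaC : ∀ j, matInner (alphaBar j) Sa ≤ ξ + c) :
    (∀ j, matInner (alphaBar j)
        ((ε₁ / (ε₁ + c)) • Sa + (1 - ε₁ / (ε₁ + c)) • Ssafe) ≤ ξ) ∧
    specNorm (Sa - ((ε₁ / (ε₁ + c)) • Sa + (1 - ε₁ / (ε₁ + c)) • Ssafe)) ≤ 2 * ν / ε₁ * c :=
  stmt_17_general alphaBar ξ ε₁ c ν hε₁ hc hν Sa Ssafe hSa hSsafe htrSa htrSsafe hSsafeC hSaC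
end
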